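/- arXiv:2403.17315 — 2 statements merged into one kernel-verified Lean document; each statement's English description precedes it below -/
import Mathlib

section
/- Let K be a field, f ∈ K[z] a polynomial of degree at least 2, and l, n coprime positive integers. For a polynomial g ∈ K[z] of degree at least 2 and a positive integer N, define the N-th dynatomic rational function Φ*_{g,N} := Π_{e | N} (g^{∘e}(z) − z)^{μ(N/e)}, an element of the rational function field K(z) (each factor g^{∘e}(z) − z is a nonzero polynomial since deg g ≥ 2). Then Π_{e | l} Φ*_{f, e·n} = Φ*_{f^{∘l}, n} in K(z). -/
open Polynomial

/-- The resultant of two polynomials `f` and `g`, defined as the determinant of their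
Sylvester matrix (rows of coefficients of `f` repeated `g.natDegree` times, followed by
rows of coefficients of `g` repeated `f.natDegree` times). -/
noncomputable def resultant {R : Type*} [CommRing R] (f g : Polynomial R) : R :=
  Matrix.det (Matrix.of fun i j : Fin (g.natDegree + f.natDegree) =>
    if (i : ℕ) < g.natDegree then
      (if (i : ℕ) ≤ (j : ℕ) ∧ (j : ℕ) ≤ (i : ℕ) + f.natDegree then
        f.coeff (f.natDegree + (i : ℕ) - (j : ℕ)) else 0)
    else
      (if (i : ℕ) - g.natDegree ≤ (j : ℕ) ∧ (j : ℕ) ≤ ((i : ℕ) - g.natDegree) + g.natDegree then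
        g.coeff (g.natDegree + ((i : ℕ) - g.natDegree) - (j : ℕ)) else 0))

/-- The `n`-fold compositional iterate of a polynomial: `polyIter f 0 = X`,
`polyIter f (n+1) = (polyIter f n).comp f`. -/
noncomputable def polyIter {R : Type*} [CommSemiring R] (f : Polynomial R) : ℕ → Polynomial R
  | 0 => X
  | n + 1 => (polyIter f n).comp f

/-- The `N`-th dynatomic rational function of a polynomial `g`:
`Φ*_{g,N} = ∏_{e ∣ N} (g^{∘e}(z) − z)^{μ(N/e)}`, an element of the rational function
field `K(z)`. -/
noncomputable def dynatomicR {K : Type*} [Field K] (g : Polynomial K) (N : ℕ) : RatFunc K :=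
  ∏ e ∈ N.divisors,
    (algebraMap (Polynomial K) (RatFunc K) (polyIter g e - Polynomial.X)) ^
      (ArithmeticFunction.moebius (N / e) : ℤ)

/-!
By Möbius inversion, `Φ*_{g,·}` is characterised by `∏_{c ∣ m} Φ*_{g,c} = g^{∘m}(z) − z`.
For `m ∣ n` the number `m` is coprime to `l`, so the divisors of `l m` are the products of
divisors of `l` and of `m`, and the left-hand side `G m := ∏_{e ∣ l} Φ*_{f,e m}` satisfies
`∏_{c ∣ m} G c = ∏_{c ∣ l m} Φ*_{f,c} = f^{∘lm}(z) − z = (f^{∘l})^{∘m}(z) − z`.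
Hence `G` and `Φ*_{f^{∘l},·}` have the same divisor products on the divisors of `n`,
and Möbius inversion again gives `G n = Φ*_{f^{∘l},n}`.
-/

open ArithmeticFunction

theorem Nat.Coprime.prod_divisors_mul {M : Type*} [CommMonoid M] {m n : ℕ}
    (hmn : m.Coprime n) (F : ℕ → M) :
    ∏ c ∈ (m * n).divisors, F c = ∏ d ∈ m.divisors, ∏ e ∈ n.divisors, F (d * e) := by
  rw [Nat.divisors_mul, Finset.mul_def, Finset.prod_image hmn.mul_injOn_divisors,
    Finset.prod_product]

theorem eq_of_forall_dvd_prod_divisors_eq {G : Type*} [CommGroupWithZero G] {A B : ℕ → G}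
    (hA : ∀ m > 0, A m ≠ 0) (hB : ∀ m > 0, B m ≠ 0) {n : ℕ} (hn : 0 < n)
    (h : ∀ m > 0, m ∣ n → ∏ c ∈ m.divisors, A c = ∏ c ∈ m.divisors, B c) :
    A n = B n := by
  have hprodB : ∀ m > 0, ∏ c ∈ m.divisors, B c ≠ 0 := fun m _ =>
    Finset.prod_ne_zero_iff.mpr fun c hc => hB c (Nat.pos_of_mem_divisors hc)
  have inversion {C : ℕ → G} (hC : ∀ m > 0, C m ≠ 0)
      (hCB : ∀ m > 0, m ∣ n → ∏ c ∈ m.divisors, C c = ∏ c ∈ m.divisors, B c) :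
      ∏ x ∈ n.divisorsAntidiagonal, (∏ c ∈ x.2.divisors, B c) ^ moebius x.1 = C n :=
    (prod_eq_iff_prod_pow_moebius_eq_on_of_nonzero {m | m ∣ n}
      (fun _ _ hab hb => dvd_trans hab hb) hC hprodB).mp hCB n hn dvd_rfl
  rw [← inversion hA h, inversion hB fun _ _ _ => rfl]

section polyIter

variable {R : Type*} [CommSemiring R] (f : R[X])

theorem polyIter_add (a b : ℕ) : polyIter f (a + b) = (polyIter f a).comp (polyIter f b) := by
  induction b with
  | zero => simp [polyIter]
  | succ b ih => rw [← add_assoc, polyIter, polyIter, ih, comp_assoc]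

theorem polyIter_polyIter (l e : ℕ) : polyIter (polyIter f l) e = polyIter f (l * e) := by
  induction e with
  | zero => rfl
  | succ e ih => rw [polyIter, ih, Nat.mul_succ, polyIter_add]

theorem natDegree_polyIter [NoZeroDivisors R] [Nontrivial R] (d : ℕ) :
    (polyIter f d).natDegree = f.natDegree ^ d := by
  induction d with
  | zero => simp [polyIter]
  | succ d ih => rw [polyIter, natDegree_comp, ih, pow_succ]

end polyIter

theorem polyIter_sub_X_ne_zero {R : Type*} [CommRing R] [NoZeroDivisors R] [Nontrivial R]
    {f : R[X]} (hf : 2 ≤ f.natDegree) {d : ℕ} (hd : 0 < d) : polyIter f d - X ≠ 0 := by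
  rw [sub_ne_zero]
  intro h
  have hdeg : f.natDegree ^ d = 1 := by rw [← natDegree_polyIter, h, natDegree_X]
  have : 2 ^ d ≤ 1 := hdeg ▸ Nat.pow_le_pow_left hf d
  exact absurd this (Nat.one_lt_two_pow hd.ne').not_ge

section dynatomic

variable {K : Type*} [Field K] {g : K[X]}

theorem dynatomicR_ne_zero (hg : 2 ≤ g.natDegree) (N : ℕ) : dynatomicR g N ≠ 0 :=
  Finset.prod_ne_zero_iff.mpr fun _ he => zpow_ne_zero _ <|
    RatFunc.algebraMap_ne_zero (polyIter_sub_X_ne_zero hg (Nat.pos_of_mem_divisors he))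

theorem prod_divisors_dynatomicR (hg : 2 ≤ g.natDegree) {m : ℕ} (hm : 0 < m) :
    ∏ c ∈ m.divisors, dynatomicR g c = algebraMap K[X] (RatFunc K) (polyIter g m - X) := by
  refine (prod_eq_iff_prod_pow_moebius_eq_of_nonzero (fun _ _ => dynatomicR_ne_zero hg _)
    (fun d hd => RatFunc.algebraMap_ne_zero (polyIter_sub_X_ne_zero hg hd))).mpr
    (fun N _ => ?_) m hm
  rw [Nat.prod_divisorsAntidiagonal' fun a b =>
    algebraMap K[X] (RatFunc K) (polyIter g b - X) ^ (moebius a : ℤ)]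
  rfl

end dynatomic

theorem dynatomic_iterate_identity {K : Type*} [Field K] (f : Polynomial K)
    (hf : 2 ≤ f.natDegree) (l n : ℕ) (hl : 0 < l) (hn : 0 < n) (hln : Nat.Coprime l n) :
    ∏ e ∈ l.divisors, dynatomicR f (e * n) = dynatomicR (polyIter f l) n := by
  have hfl : 2 ≤ (polyIter f l).natDegree :=
    hf.trans (by rw [natDegree_polyIter]; exact Nat.le_self_pow hl.ne' _)
  refine eq_of_forall_dvd_prod_divisors_eq (A := fun m => ∏ e ∈ l.divisors, dynatomicR f (e * m))
    (B := dynatomicR (polyIter f l))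
    (fun _ _ => Finset.prod_ne_zero_iff.mpr fun _ _ => dynatomicR_ne_zero hf _)
    (fun _ _ => dynatomicR_ne_zero hfl _) hn fun m hm hmn => ?_
  calc ∏ c ∈ m.divisors, ∏ e ∈ l.divisors, dynatomicR f (e * c)
      = ∏ c ∈ (l * m).divisors, dynatomicR f c := by
        rw [Finset.prod_comm, (hln.coprime_dvd_right hmn).prod_divisors_mul]
    _ = algebraMap K[X] (RatFunc K) (polyIter (polyIter f l) m - X) := by
        rw [prod_divisors_dynatomicR hf (Nat.mul_pos hl hm), polyIter_polyIter]
    _ = ∏ c ∈ m.divisors, dynatomicR (polyIter f l) c := (prod_divisors_dynatomicR hfl hm).symm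
end

section
/- Let g_a(z) = a z (1 − z) be the logistic map with parameter a. (1) If a ∈ ℂ is such that g_a has a parabolic periodic point in ℂ, then a is an algebraic integer. (2) If moreover a ∈ ℚ with 0 ≤ a ≤ 4 and g_a has a parabolic periodic point in ℂ, then a = 1 or a = 3. (3) Conversely, g_1 and g_3 each have a parabolic fixed point: g_1'(0) = 1 at the fixed point 0, and g_3'(2/3) = −1 at the fixed point 2/3. -/
/-!
The substitution `w = a / 2 - a * z` conjugates `z ↦ a * z * (1 - z)` to `w ↦ w ^ 2 + c` with
`c = a / 2 - (a / 2) ^ 2`, and turns the multiplier of an `n`-cycle into `∏ 2 * wᵢ`; being a root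
of unity, it has valuation `1` for every valuation `v`. For a nonarchimedean `v`, an orbit with
`1 < v w` and `v c < v w ^ 2` escapes, so on a cycle `v wᵢ ^ 2 = v c` when `1 < v c`, and
`v wᵢ ≤ 1` when `v c ≤ 1`. If `1 < v a`, the first case gives the multiplier valuation
`v a ^ n > 1`; hence `a` lies in every valuation subring, i.e. it is integral. If `a ∈ 2ℤ`, a
valuation with `v 2 < 1` gives it valuation at most `v 2 ^ n < 1`. The rational algebraic integers
in `[0, 4]` are `0, …, 4`, and the even ones are excluded.
-/

open Finset Function

theorem isIntegral_of_forall_mem_valuationSubring {R K : Type*} [CommRing R] [Field K]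
    [Algebra R K] {x : K} (hx : ∀ V : ValuationSubring K, x ∈ V) : IsIntegral R x := by
  by_contra h
  obtain ⟨V, -, hxV⟩ := Subring.exists_le_valuationSubring_of_isIntegrallyClosedIn
    (R := (integralClosure R K).toSubring) h
  exact hxV (hx V)

namespace Valuation

variable {R Γ₀ : Type*} [CommRing R] [LinearOrderedCommGroupWithZero Γ₀] (v : Valuation R Γ₀)
  {b c w x : R} {m n : ℕ}

theorem map_two_le_one : v 2 ≤ 1 := by
  rw [← one_add_one_eq_two]
  exact v.map_add_le v.map_one.le v.map_one.le

theorem map_eq_one_of_pow_eq_one (hn : n ≠ 0) (hx : x ^ n = 1) : v x = 1 := by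
  rw [← pow_eq_one_iff_left hn, ← map_pow, hx, map_one]

theorem map_sq_add_of_lt (h : v c < v w ^ 2) : v (w ^ 2 + c) = v w ^ 2 := by
  rw [v.map_add_eq_of_lt_left (by rwa [map_pow]), map_pow]

theorem strictMono_map_iterate_sq_add (h1 : 1 < v w) (hc : v c < v w ^ 2) :
    StrictMono fun k => v ((fun z => z ^ 2 + c)^[k] w) := by
  have key : ∀ k, 1 < v ((fun z => z ^ 2 + c)^[k] w) ∧
      v c < v ((fun z => z ^ 2 + c)^[k] w) ^ 2 := by
    intro k
    induction k with
    | zero => exact ⟨h1, hc⟩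
    | succ k ih =>
      rw [iterate_succ_apply', v.map_sq_add_of_lt ih.2]
      have hsq := one_lt_pow₀ ih.1 two_ne_zero
      exact ⟨hsq, ih.2.trans (lt_self_pow₀ hsq one_lt_two)⟩
  refine strictMono_nat_of_lt_succ fun k => ?_
  simp only [iterate_succ_apply']
  rw [v.map_sq_add_of_lt (key k).2]
  exact lt_self_pow₀ (key k).1 one_lt_two

theorem not_escaping_of_isPeriodicPt (hm : 0 < m) (hw : IsPeriodicPt (fun z => z ^ 2 + c) m w) :
    ¬(1 < v w ∧ v c < v w ^ 2) := fun h => by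
  have := (v.strictMono_map_iterate_sq_add h.1 h.2) hm
  simp only [iterate_zero_apply, hw.eq] at this
  exact this.false

theorem map_le_one_of_isPeriodicPt (hm : 0 < m) (hw : IsPeriodicPt (fun z => z ^ 2 + c) m w)
    (hc : v c ≤ 1) : v w ≤ 1 :=
  not_lt.1 fun h =>
    v.not_escaping_of_isPeriodicPt hm hw ⟨h, hc.trans_lt (one_lt_pow₀ h two_ne_zero)⟩

theorem map_sq_eq_of_isPeriodicPt (hm : 0 < m) (hw : IsPeriodicPt (fun z => z ^ 2 + c) m w)
    (hc : 1 < v c) : v w ^ 2 = v c := by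
  rcases lt_trichotomy (v w ^ 2) (v c) with hlt | heq | hgt
  · -- the next point of the orbit has valuation `v c`, which escapes
    have hnext : v (w ^ 2 + c) = v c := v.map_add_eq_of_lt_right (by rwa [map_pow])
    refine (v.not_escaping_of_isPeriodicPt hm hw.apply ⟨?_, ?_⟩).elim
    · rwa [hnext]
    · rw [hnext]; exact lt_self_pow₀ hc one_lt_two
  · exact heq
  · refine (v.not_escaping_of_isPeriodicPt hm hw ⟨?_, hgt⟩).elim
    exact not_le.1 fun h => (hc.trans hgt).not_ge (Right.pow_le_one_of_le h)

theorem map_two_mul_le_one_of_isPeriodicPt {w : ℕ → R} (hn : 0 < n)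
    (hw : ∀ i, IsPeriodicPt (fun z => z ^ 2 + (b - b ^ 2)) n (w i))
    (hmul : v (∏ i ∈ range n, 2 * w i) = 1) : v (2 * b) ≤ 1 := by
  by_contra! h
  have hb : 1 < v b := h.trans_le (by rw [map_mul]; exact mul_le_of_le_one_left' v.map_two_le_one)
  have hc : v (b - b ^ 2) = v b ^ 2 := by
    rw [v.map_sub_eq_of_lt_right (by rw [map_pow]; exact lt_self_pow₀ hb one_lt_two), map_pow]
  have hwi : ∀ i, v (2 * w i) ^ 2 = v (2 * b) ^ 2 := fun i => by
    rw [map_mul, map_mul, mul_pow, mul_pow, v.map_sq_eq_of_isPeriodicPt hn (hw i)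
      (hc ▸ one_lt_pow₀ hb two_ne_zero), hc]
  have : (v (2 * b) ^ 2) ^ n = 1 := calc
    _ = ∏ i ∈ range n, v (2 * w i) ^ 2 := by
      rw [prod_congr rfl fun i _ => hwi i, prod_const, card_range]
    _ = 1 := by rw [prod_pow, ← map_prod, hmul, one_pow]
  exact (one_lt_pow₀ (one_lt_pow₀ h two_ne_zero) hn.ne').ne' this

theorem one_le_map_two_of_isPeriodicPt {w : ℕ → R} (hn : 0 < n)
    (hw : ∀ i, IsPeriodicPt (fun z => z ^ 2 + (b - b ^ 2)) n (w i))
    (hmul : v (∏ i ∈ range n, 2 * w i) = 1) (hb : v b ≤ 1) : 1 ≤ v 2 := by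
  have hc : v (b - b ^ 2) ≤ 1 :=
    v.map_sub_le hb (by rw [map_pow]; exact Right.pow_le_one_of_le hb)
  have : 1 ≤ v 2 ^ n := calc
    1 = ∏ i ∈ range n, v 2 * v (w i) := by rw [← hmul, map_prod]; simp only [map_mul]
    _ ≤ ∏ _i ∈ range n, v 2 := prod_le_prod' fun i _ =>
      mul_le_of_le_one_right' (v.map_le_one_of_isPeriodicPt hn (hw i) hc)
    _ = v 2 ^ n := by rw [prod_const, card_range]
  exact not_lt.1 fun h => this.not_gt ((pow_lt_one_iff hn.ne').2 h)

end Valuation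

section Logistic

def logisticMap {R : Type*} [Ring R] (a z : R) : R := a * z * (1 - z)

theorem logisticMap_semiconj {K : Type*} [Field K] [NeZero (2 : K)] (a : K) :
    Semiconj (fun z => a / 2 - a * z) (logisticMap a) (fun w => w ^ 2 + (a / 2 - (a / 2) ^ 2)) :=
  fun z => by simp only [logisticMap]; field_simp; ring

variable {𝕜 : Type*} [NontriviallyNormedField 𝕜]

theorem hasDerivAt_logisticMap (a z : 𝕜) : HasDerivAt (logisticMap a) (a - 2 * a * z) z := by
  have h : HasDerivAt (fun z => a * z * (1 - z)) (a * 1 * (1 - z) + a * z * -1) z :=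
    ((hasDerivAt_id' z).const_mul a).mul ((hasDerivAt_id' z).const_sub 1)
  exact h.congr_deriv (by ring)

theorem deriv_iterate_eq_prod {f : 𝕜 → 𝕜} (hf : Differentiable 𝕜 f) (n : ℕ) (z : 𝕜) :
    deriv f^[n] z = ∏ i ∈ range n, deriv f (f^[i] z) := by
  induction n with
  | zero => simp
  | succ n ih =>
    rw [iterate_succ', prod_range_succ, deriv_comp z (hf _) ((hf.iterate n) z), ih, mul_comm]

def IsParabolicPeriodicPt (f : 𝕜 → 𝕜) (z : 𝕜) : Prop :=
  ∃ n : ℕ, 1 ≤ n ∧ f^[n] z = z ∧ ∃ j : ℕ, 0 < j ∧ deriv (f^[n]) z ^ j = 1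

theorem IsParabolicPeriodicPt.exists_cycle_sq_add [NeZero (2 : 𝕜)] {a z₀ : 𝕜}
    (h : IsParabolicPeriodicPt (logisticMap a) z₀) :
    ∃ n, 0 < n ∧ ∃ w : ℕ → 𝕜,
      (∀ i, IsPeriodicPt (fun z => z ^ 2 + (a / 2 - (a / 2) ^ 2)) n (w i)) ∧
      ∃ j, 0 < j ∧ (∏ i ∈ range n, 2 * w i) ^ j = 1 := by
  obtain ⟨n, hn, hz₀, j, hj, hmul⟩ := h
  refine ⟨n, hn, fun i => a / 2 - a * (logisticMap a)^[i] z₀,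
    fun i => (IsPeriodicPt.apply_iterate hz₀ i).map (logisticMap_semiconj a), j, hj, ?_⟩
  rw [deriv_iterate_eq_prod (fun z => (hasDerivAt_logisticMap a z).differentiableAt)] at hmul
  convert hmul using 2
  refine prod_congr rfl fun i _ => ?_
  rw [(hasDerivAt_logisticMap a _).deriv]
  field_simp

theorem isIntegral_of_isParabolicPeriodicPt_logisticMap [NeZero (2 : 𝕜)] {a z₀ : 𝕜}
    (h : IsParabolicPeriodicPt (logisticMap a) z₀) : IsIntegral ℤ a := by
  obtain ⟨n, hn, w, hw, j, hj, hmul⟩ := h.exists_cycle_sq_add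
  refine isIntegral_of_forall_mem_valuationSubring fun V => ?_
  have := V.valuation.map_two_mul_le_one_of_isPeriodicPt hn hw
    (V.valuation.map_eq_one_of_pow_eq_one hj.ne' hmul)
  rwa [mul_div_cancel₀ _ two_ne_zero, V.valuation_le_one_iff] at this

theorem not_isParabolicPeriodicPt_logisticMap_of_valuation [NeZero (2 : 𝕜)] {Γ₀ : Type*}
    [LinearOrderedCommGroupWithZero Γ₀] (v : Valuation 𝕜 Γ₀) (h2 : v 2 < 1) {a : 𝕜}
    (ha : v (a / 2) ≤ 1) (z₀ : 𝕜) : ¬IsParabolicPeriodicPt (logisticMap a) z₀ := fun h => by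
  obtain ⟨n, hn, w, hw, j, hj, hmul⟩ := h.exists_cycle_sq_add
  exact h2.not_ge
    (v.one_le_map_two_of_isPeriodicPt hn hw (v.map_eq_one_of_pow_eq_one hj.ne' hmul) ha)

end Logistic

theorem exists_intCast_eq_of_isIntegral_ratCast {K : Type*} [Field K] [CharZero K] {q : ℚ}
    (h : IsIntegral ℤ (q : K)) : ∃ k : ℤ, (k : ℚ) = q :=
  IsIntegrallyClosed.isIntegral_iff.1 ((isIntegral_algebraMap_iff (algebraMap ℚ K).injective).1 h)

theorem exists_valuationSubring_valuation_two_lt_one (K : Type*) [Field K] [CharZero K] :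
    ∃ V : ValuationSubring K, V.valuation 2 < 1 := by
  have : ¬IsIntegral ℤ ((2⁻¹ : ℚ) : K) := fun h => by
    obtain ⟨k, hk⟩ := exists_intCast_eq_of_isIntegral_ratCast h
    have : (2 * k : ℚ) = 1 := by rw [hk]; norm_num
    norm_cast at this
    omega
  obtain ⟨V, hV⟩ : ∃ V : ValuationSubring K, (2 : K)⁻¹ ∉ V := by
    by_contra! hV
    exact this (by simpa using isIntegral_of_forall_mem_valuationSubring (R := ℤ) hV)
  refine ⟨V, ?_⟩
  rwa [← V.valuation_le_one_iff, not_le, V.valuation.one_lt_val_iff (inv_ne_zero two_ne_zero),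
    inv_inv] at hV

theorem not_isParabolicPeriodicPt_logisticMap_two_mul_intCast {K : Type*}
    [NontriviallyNormedField K] [CharZero K] (k : ℤ) (z₀ : K) :
    ¬IsParabolicPeriodicPt (logisticMap (2 * k : K)) z₀ := by
  obtain ⟨V, hV⟩ := exists_valuationSubring_valuation_two_lt_one K
  refine not_isParabolicPeriodicPt_logisticMap_of_valuation V.valuation hV ?_ z₀
  rw [mul_div_cancel_left₀ _ two_ne_zero, V.valuation_le_one_iff]
  exact intCast_mem V k

theorem logistic_map_parabolic_parameters :
    -- (1) if g_a(z) = az(1−z) has a parabolic periodic point, a is an algebraic integer: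
    (∀ a : ℂ,
      (∃ z₀ : ℂ, ∃ n : ℕ, 1 ≤ n ∧ (fun z : ℂ => a * z * (1 - z))^[n] z₀ = z₀ ∧
        ∃ j : ℕ, 0 < j ∧ (deriv ((fun z : ℂ => a * z * (1 - z))^[n]) z₀) ^ j = 1) →
      IsIntegral ℤ a) ∧
    -- (2) if moreover a ∈ ℚ with 0 ≤ a ≤ 4, then a = 1 or a = 3:
    (∀ a : ℚ, 0 ≤ a → a ≤ 4 →
      (∃ z₀ : ℂ, ∃ n : ℕ, 1 ≤ n ∧
        (fun z : ℂ => (a : ℂ) * z * (1 - z))^[n] z₀ = z₀ ∧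
        ∃ j : ℕ, 0 < j ∧ (deriv ((fun z : ℂ => (a : ℂ) * z * (1 - z))^[n]) z₀) ^ j = 1) →
      a = 1 ∨ a = 3) ∧
    -- (3) conversely, g₁ and g₃ have parabolic fixed points 0 and 2/3, with
    -- multipliers 1 and −1 respectively:
    ((fun z : ℂ => 1 * z * (1 - z)) 0 = 0 ∧
      deriv (fun z : ℂ => 1 * z * (1 - z)) 0 = 1 ∧
      (fun z : ℂ => 3 * z * (1 - z)) (2 / 3 : ℂ) = (2 / 3 : ℂ) ∧
      deriv (fun z : ℂ => 3 * z * (1 - z)) (2 / 3 : ℂ) = -1) := by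
  refine ⟨fun a ⟨_, h⟩ => isIntegral_of_isParabolicPeriodicPt_logisticMap h, ?_, by norm_num,
    (hasDerivAt_logisticMap 1 0).deriv.trans (by norm_num), by norm_num,
    (hasDerivAt_logisticMap 3 (2 / 3)).deriv.trans (by norm_num)⟩
  rintro a ha0 ha4 ⟨z₀, h⟩
  obtain ⟨k, rfl⟩ := exists_intCast_eq_of_isIntegral_ratCast
    (isIntegral_of_isParabolicPeriodicPt_logisticMap h)
  rcases Int.even_or_odd' k with ⟨l, rfl | rfl⟩
  · exact absurd h (by push_cast; exact not_isParabolicPeriodicPt_logisticMap_two_mul_intCast l z₀)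
  · have hl0 : 0 ≤ 2 * l + 1 := by exact_mod_cast ha0
    have hl4 : 2 * l + 1 ≤ 4 := by exact_mod_cast ha4
    obtain rfl | rfl : l = 0 ∨ l = 1 := by omega
    · norm_num
    · norm_num
end
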